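/- arXiv:2104.07498 — 2 statements merged into one kernel-verified Lean document; each statement's English description precedes it below -/
import Mathlib

section
/- Let E and F be Riesz spaces and let T : E → F be a Riesz homomorphism. If B is a projection band of E (a band with E = B ⊕ B^d), then T(B) is a projection band of the Riesz space T(E): T(B) is a band of T(E) and every element of T(E) is the sum of an element of T(B) and an element of T(E) disjoint from every element of T(B). -/
/-!
Write `x = x₁ + x₂` with `x₁ ∈ B` and `x₂` disjoint from `B`. Since `T` preserves `⊓` and `|·|`,
`T x₂` is disjoint from `T(B)`, so `T(B)` and `T x₂` play the roles of `B` and `x₂` in the range.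
If `|T x| ≤ |T c|` with `c ∈ B`, then `T x₂ = T x - T x₁` is disjoint from itself, hence zero.
If `T x` is the supremum in `T(E)` of `D ⊆ T(B)`, then for `d ∈ D` the element `d - T x₁ ∈ T(B)`
lies below the disjoint element `T x₂`, which forces `d - T x₁ ≤ 0 ≤ T x₂`; thus `T x₁` is an
upper bound of `D`, so `T x₂ ≤ 0` and `T x = T x₁`.
-/

section LatticeOrderedGroup

variable {α : Type*} [AddCommGroup α] [Lattice α]

lemma nonpos_of_le_of_abs_inf_abs_eq_zero {e a : α} (hae : a ≤ e) (he : |e| ⊓ |a| = 0) :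
    a ≤ 0 :=
  he ▸ le_inf (hae.trans (le_abs_self e)) (le_abs_self a)

variable [AddLeftMono α]

lemma eq_zero_of_abs_eq_zero {a : α} (h : |a| = 0) : a = 0 :=
  le_antisymm (h ▸ le_abs_self a) (neg_nonpos.mp (h ▸ neg_le_abs a))

lemma add_inf_le_inf_add_inf {a b c : α} (ha : 0 ≤ a) (hb : 0 ≤ b) (hc : 0 ≤ c) :
    (a + b) ⊓ c ≤ a ⊓ c + b ⊓ c := by
  rw [inf_add, add_inf, add_inf]
  exact le_inf (le_inf inf_le_left (inf_le_right.trans (le_add_of_nonneg_left ha)))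
    (le_inf (inf_le_right.trans (le_add_of_nonneg_right hb))
      (inf_le_right.trans (le_add_of_nonneg_left hc)))

lemma abs_inf_abs_add_eq_zero {e a b : α} (ha : |e| ⊓ |a| = 0) (hb : |e| ⊓ |b| = 0) :
    |e| ⊓ |a + b| = 0 := by
  refine le_antisymm ?_ (le_inf (abs_nonneg _) (abs_nonneg _))
  calc |e| ⊓ |a + b| ≤ (|a| + |b|) ⊓ |e| := by
        rw [inf_comm]; exact inf_le_inf_right _ (abs_add_le a b)
    _ ≤ |a| ⊓ |e| + |b| ⊓ |e| :=
        add_inf_le_inf_add_inf (abs_nonneg a) (abs_nonneg b) (abs_nonneg e)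
    _ = 0 := by rw [inf_comm, ha, inf_comm, hb, add_zero]

lemma abs_inf_abs_eq_zero_of_abs_le {e a b : α} (hab : |a| ≤ |b|) (hb : |e| ⊓ |b| = 0) :
    |e| ⊓ |a| = 0 :=
  le_antisymm (hb ▸ inf_le_inf_left _ hab) (le_inf (abs_nonneg _) (abs_nonneg _))

lemma nonneg_of_le_of_abs_inf_abs_eq_zero {e a : α} (hae : a ≤ e) (he : |e| ⊓ |a| = 0) :
    0 ≤ e := by
  refine neg_nonpos.mp (nonpos_of_le_of_abs_inf_abs_eq_zero (neg_le_neg_iff.mpr hae) ?_)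
  rwa [abs_neg, abs_neg, inf_comm]

end LatticeOrderedGroup

section SupPreserving

variable {α β G : Type*} [AddCommGroup α] [Lattice α] [AddCommGroup β] [Lattice β]
  [FunLike G α β] [AddMonoidHomClass G α β] {f : G}

lemma map_abs_of_map_sup (hf : ∀ a b, f (a ⊔ b) = f a ⊔ f b) (a : α) : f |a| = |f a| := by
  rw [abs, hf, map_neg, abs]

variable [AddLeftMono α] [AddLeftMono β]

lemma map_inf_of_map_sup (hf : ∀ a b, f (a ⊔ b) = f a ⊔ f b) (a b : α) :
    f (a ⊓ b) = f a ⊓ f b := by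
  rw [← neg_neg (a ⊓ b), neg_inf, map_neg, hf, map_neg, map_neg, neg_sup, neg_neg, neg_neg]

lemma map_abs_inf_abs_eq_zero (hf : ∀ a b, f (a ⊔ b) = f a ⊔ f b) {a b : α}
    (h : |a| ⊓ |b| = 0) : |f a| ⊓ |f b| = 0 := by
  rw [← map_abs_of_map_sup hf, ← map_abs_of_map_sup hf, ← map_inf_of_map_sup hf, h, map_zero]

end SupPreserving

section ImageOfProjectionBand

variable {E F G : Type*} [AddCommGroup E] [Lattice E] [AddLeftMono E]
  [AddCommGroup F] [Lattice F] [AddLeftMono F] [FunLike G E F] [AddMonoidHomClass G E F]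
  {f : G} {B : AddSubgroup E}

def AddSubgroup.HasDisjointComplement (B : AddSubgroup E) : Prop :=
  ∀ x : E, ∃ x₁ ∈ B, ∃ x₂ : E, (∀ b ∈ B, |x₂| ⊓ |b| = 0) ∧ x = x₁ + x₂

lemma exists_add_map_disjoint (hf : ∀ a b, f (a ⊔ b) = f a ⊔ f b)
    (hB : B.HasDisjointComplement) (x : E) :
    ∃ x₁ ∈ B, ∃ x₂ : E, (∀ b ∈ B, |f x₂| ⊓ |f b| = 0) ∧ x = x₁ + x₂ := by
  obtain ⟨x₁, hx₁, x₂, hx₂, rfl⟩ := hB x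
  exact ⟨x₁, hx₁, x₂, fun b hb ↦ map_abs_inf_abs_eq_zero hf (hx₂ b hb), rfl⟩

lemma mem_image_of_abs_le (hf : ∀ a b, f (a ⊔ b) = f a ⊔ f b)
    (hB : B.HasDisjointComplement)
    {y b : F} (hy : y ∈ Set.range f) (hb : b ∈ f '' B) (hyb : |y| ≤ |b|) : y ∈ f '' B := by
  obtain ⟨x, rfl⟩ := hy
  obtain ⟨c, hc, rfl⟩ := hb
  obtain ⟨x₁, hx₁, x₂, hx₂, rfl⟩ := exists_add_map_disjoint hf hB x
  have hx : |f x₂| ⊓ |f (x₁ + x₂)| = 0 := abs_inf_abs_eq_zero_of_abs_le hyb (hx₂ c hc)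
  have hself : |f x₂| ⊓ |f x₂| = 0 := by
    have h := abs_inf_abs_add_eq_zero hx (by rw [abs_neg]; exact hx₂ x₁ hx₁)
    rwa [map_add, add_neg_cancel_comm] at h
  have hzero : f x₂ = 0 := eq_zero_of_abs_eq_zero (by rwa [inf_idem] at hself)
  exact ⟨x₁, hx₁, by rw [map_add, hzero, add_zero]⟩

lemma mem_image_of_isLUB_range (hf : ∀ a b, f (a ⊔ b) = f a ⊔ f b)
    (hB : B.HasDisjointComplement)
    {D : Set F} {s : F} (hD : D ⊆ f '' B) (hs : s ∈ Set.range f) (hub : ∀ d ∈ D, d ≤ s)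
    (hlub : ∀ u ∈ Set.range f, (∀ d ∈ D, d ≤ u) → s ≤ u) : s ∈ f '' B := by
  obtain ⟨x, rfl⟩ := hs
  obtain ⟨x₁, hx₁, x₂, hx₂, rfl⟩ := exists_add_map_disjoint hf hB x
  have below : ∀ d ∈ D, d - f x₁ ≤ f x₂ ∧ |f x₂| ⊓ |d - f x₁| = 0 := by
    intro d hd
    obtain ⟨c, hc, rfl⟩ := hD hd
    refine ⟨sub_le_iff_le_add'.mpr ((map_add f x₁ x₂) ▸ hub _ hd), ?_⟩
    rw [← map_sub]
    exact hx₂ _ (B.sub_mem hc hx₁)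
  have hle : f x₂ ≤ 0 := by
    have h := hlub (f x₁) ⟨x₁, rfl⟩ fun d hd ↦
      sub_nonpos.mp (nonpos_of_le_of_abs_inf_abs_eq_zero (below d hd).1 (below d hd).2)
    rwa [map_add, add_le_iff_nonpos_right] at h
  have hge : 0 ≤ f x₂ := by
    by_cases hne : D.Nonempty
    · obtain ⟨d, hd⟩ := hne
      exact nonneg_of_le_of_abs_inf_abs_eq_zero (below d hd).1 (below d hd).2
    · have h := hlub (f (x₁ + x₂ + x₂)) ⟨_, rfl⟩ fun d hd ↦ absurd ⟨d, hd⟩ hne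
      rwa [map_add f (x₁ + x₂), le_add_iff_nonneg_right] at h
  exact ⟨x₁, hx₁, by rw [map_add, le_antisymm hle hge, add_zero]⟩

lemma exists_add_of_mem_range (hf : ∀ a b, f (a ⊔ b) = f a ⊔ f b)
    (hB : B.HasDisjointComplement)
    {y : F} (hy : y ∈ Set.range f) :
    ∃ y₁ ∈ f '' B, ∃ y₂ ∈ Set.range f, (∀ b ∈ f '' B, |y₂| ⊓ |b| = 0) ∧ y = y₁ + y₂ := by
  obtain ⟨x, rfl⟩ := hy
  obtain ⟨x₁, hx₁, x₂, hx₂, rfl⟩ := exists_add_map_disjoint hf hB x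
  exact ⟨f x₁, ⟨x₁, hx₁, rfl⟩, f x₂, ⟨x₂, rfl⟩, by rintro _ ⟨c, hc, rfl⟩; exact hx₂ c hc,
    map_add f x₁ x₂⟩

end ImageOfProjectionBand

theorem stmt_7_general {E F : Type*}
    [AddCommGroup E] [Lattice E] [Module ℝ E]
    [CovariantClass E E (· + ·) (· ≤ ·)]
    [AddCommGroup F] [Lattice F] [Module ℝ F]
    [CovariantClass F F (· + ·) (· ≤ ·)]
    (T : E →ₗ[ℝ] F) (hT : ∀ x y : E, T (x ⊔ y) = T x ⊔ T y)
    (B : Submodule ℝ E)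
    -- `B` is a projection band: `E = B ⊕ Bᵈ`
    (hBproj : ∀ x : E, ∃ x₁ ∈ B, ∃ x₂ : E, (∀ b ∈ B, |x₂| ⊓ |b| = 0) ∧ x = x₁ + x₂) :
    -- `T(B)` is an ideal of `T(E)`
    ((∀ y ∈ LinearMap.range T, ∀ b ∈ B.map T, |y| ≤ |b| → y ∈ B.map T) ∧
    -- `T(B)` is a band of `T(E)`: suprema (relative to `T(E)`) of subsets of
    -- `T(B)` belong to `T(B)`
    (∀ (D : Set F) (s : F), D ⊆ (B.map T : Set F) → s ∈ LinearMap.range T →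
      (∀ d ∈ D, d ≤ s) →
      (∀ u ∈ LinearMap.range T, (∀ d ∈ D, d ≤ u) → s ≤ u) →
      s ∈ B.map T) ∧
    -- every element of `T(E)` decomposes
    (∀ y ∈ LinearMap.range T, ∃ y₁ ∈ B.map T, ∃ y₂ ∈ LinearMap.range T,
      (∀ b ∈ B.map T, |y₂| ⊓ |b| = 0) ∧ y = y₁ + y₂)) := by
  simp only [← SetLike.mem_coe, Submodule.map_coe, LinearMap.coe_range]
  exact ⟨fun _ hy _ hb ↦ mem_image_of_abs_le (B := B.toAddSubgroup) hT hBproj hy hb,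
    fun _ _ hD hs ↦ mem_image_of_isLUB_range (B := B.toAddSubgroup) hT hBproj hD hs,
    fun _ hy ↦ exists_add_of_mem_range (B := B.toAddSubgroup) hT hBproj hy⟩

/-- For a Riesz homomorphism `T : E → F`, the image of a projection
band `B` of `E` is a projection band of the range `T(E)`: it is an ideal of
`T(E)`, a band of `T(E)` (closed under suprema, computed relative to `T(E)`, of
its subsets), and every element of `T(E)` is the sum of an element of `T(B)` and
an element of `T(E)` disjoint from every element of `T(B)`. -/
theorem stmt_7 {E F : Type*}
    [AddCommGroup E] [Lattice E] [Module ℝ E]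
    [CovariantClass E E (· + ·) (· ≤ ·)] [PosSMulMono ℝ E]
    [AddCommGroup F] [Lattice F] [Module ℝ F]
    [CovariantClass F F (· + ·) (· ≤ ·)] [PosSMulMono ℝ F]
    (T : E →ₗ[ℝ] F) (hT : ∀ x y : E, T (x ⊔ y) = T x ⊔ T y)
    (B : Submodule ℝ E)
    -- `B` is an ideal of `E`
    (hBideal : ∀ x y : E, |x| ≤ |y| → y ∈ B → x ∈ B)
    -- `B` is a band of `E`
    (hBband : ∀ (D : Set E) (s : E), D ⊆ (B : Set E) → IsLUB D s → s ∈ B)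
    -- `B` is a projection band: `E = B ⊕ Bᵈ`
    (hBproj : ∀ x : E, ∃ x₁ ∈ B, ∃ x₂ : E, (∀ b ∈ B, |x₂| ⊓ |b| = 0) ∧ x = x₁ + x₂) :
    -- `T(B)` is an ideal of `T(E)`
    ((∀ y ∈ LinearMap.range T, ∀ b ∈ B.map T, |y| ≤ |b| → y ∈ B.map T) ∧
    -- `T(B)` is a band of `T(E)`: suprema (relative to `T(E)`) of subsets of
    -- `T(B)` belong to `T(B)`
    (∀ (D : Set F) (s : F), D ⊆ (B.map T : Set F) → s ∈ LinearMap.range T →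
      (∀ d ∈ D, d ≤ s) →
      (∀ u ∈ LinearMap.range T, (∀ d ∈ D, d ≤ u) → s ≤ u) →
      s ∈ B.map T) ∧
    -- every element of `T(E)` decomposes
    (∀ y ∈ LinearMap.range T, ∃ y₁ ∈ B.map T, ∃ y₂ ∈ LinearMap.range T,
      (∀ b ∈ B.map T, |y₂| ⊓ |b| = 0) ∧ y = y₁ + y₂)) :=
  stmt_7_general T hT B hBproj
end

section
/- For a Riesz space E, the following are equivalent: (1) every positive linear operator from E into an arbitrary Archimedean Riesz space is σ-order continuous; (2) every Riesz homomorphism from E into an arbitrary Archimedean Riesz space is σ-order continuous; (3) every uniformly closed ideal of E is a σ-ideal. -/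
universe u

/-!
(1) → (2) because Riesz homomorphisms are positive.

(2) → (3): an order ideal `A` makes `E ⧸ A` a Riesz space, which is Archimedean when `A` is
uniformly closed. If `0 ≤ uₙ ↑ x` with `uₙ ∈ A`, then `x - uₙ ↓ 0`, and the quotient map sends
this sequence to the constant `[x]`, which must therefore vanish.

(3) → (1): let `T ≥ 0` map into an Archimedean space and `yₙ ↓ 0`. For `ε > 0` put
`qₙ = (y₀ - ε⁻¹ • yₙ)⁺`, so that `qₙ ↑ y₀`. The `x` for which `T (|x| - l • qₙ)⁺` has infimum `0`
over `n` and `l ≥ 0` form a uniformly closed ideal containing every `qₙ`, hence `y₀`. Since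
`yₙ - ε • y₀ ≤ (y₀ - l • qₙ)⁺`, every lower bound of `T yₙ` is at most `ε • T y₀`.
-/

open Set

section LatticeOrderedSpace

variable {E : Type*} [AddCommGroup E] [Lattice E]

section Module

variable [Module ℝ E] [PosSMulMono ℝ E]

lemma smul_sup_of_nonneg {c : ℝ} (hc : 0 ≤ c) (a b : E) : c • (a ⊔ b) = c • a ⊔ c • b := by
  rcases hc.eq_or_lt with rfl | hc
  · simp
  · exact (OrderIso.smulRight hc).map_sup a b

lemma smul_inf_of_nonneg {c : ℝ} (hc : 0 ≤ c) (a b : E) : c • (a ⊓ b) = c • a ⊓ c • b := by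
  rcases hc.eq_or_lt with rfl | hc
  · simp
  · exact (OrderIso.smulRight hc).map_inf a b

lemma posPart_smul_of_nonneg {c : ℝ} (hc : 0 ≤ c) (a : E) : (c • a)⁺ = c • a⁺ := by
  rw [posPart_def, posPart_def, smul_sup_of_nonneg hc, smul_zero]

lemma abs_smul_of_nonneg {c : ℝ} (hc : 0 ≤ c) (a : E) : |c • a| = c • |a| := by
  rw [abs, abs, smul_sup_of_nonneg hc, smul_neg]

lemma abs_smul_eq_abs_smul_abs (c : ℝ) (a : E) : |c • a| = |c| • |a| := by
  rcases le_total 0 c with hc | hc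
  · rw [abs_smul_of_nonneg hc, abs_of_nonneg hc]
  · rw [← neg_smul_neg, abs_smul_of_nonneg (neg_nonneg.2 hc), abs_of_nonpos hc, abs_neg]

end Module

variable [IsOrderedAddMonoid E]

lemma posPart_add_le (a b : E) : (a + b)⁺ ≤ a⁺ + b⁺ :=
  sup_le (add_le_add (le_posPart a) (le_posPart b))
    (add_nonneg (posPart_nonneg a) (posPart_nonneg b))

lemma le_posPart_sub_of_inf_eq_zero {x u w : E} (hxw : x ⊓ w = 0) (hxu : x ≤ u) :
    x ≤ (u - w)⁺ :=
  calc x = x - x ⊓ w := by rw [hxw, sub_zero]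
    _ = (x - w)⁺ := by rw [inf_eq_sub_posPart_sub, sub_sub_cancel]
    _ ≤ (u - w)⁺ := posPart_mono (sub_le_sub_right hxu w)

variable [Module ℝ E] [PosSMulMono ℝ E]

lemma posPart_sub_smul_anti {a b c : E} {l : ℝ} (hl : 0 ≤ l) (hbc : b ≤ c) :
    (a - l • c)⁺ ≤ (a - l • b)⁺ :=
  posPart_mono (sub_le_sub_left (smul_le_smul_of_nonneg_left hbc hl) a)

lemma smul_inf_smul_eq_zero {x y : E} (hxy : x ⊓ y = 0) {c d : ℝ} (hc : 0 ≤ c) (hd : 0 ≤ d) :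
    (c • x) ⊓ (d • y) = 0 := by
  have hx : 0 ≤ x := hxy ▸ inf_le_left
  have hy : 0 ≤ y := hxy ▸ inf_le_right
  have hM : 0 ≤ c + d + 1 := by positivity
  refine le_antisymm ?_ (le_inf (smul_nonneg hc hx) (smul_nonneg hd hy))
  calc (c • x) ⊓ (d • y) ≤ ((c + d + 1) • x) ⊓ ((c + d + 1) • y) :=
        inf_le_inf (smul_le_smul_of_nonneg_right (by linarith) hx)
          (smul_le_smul_of_nonneg_right (by linarith) hy)
    _ = 0 := by rw [← smul_inf_of_nonneg hM, hxy, smul_zero]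

/-- `K⁻¹ • (u - K • v)⁻` bounds `v - K⁻¹ • u` from above, lies below `u` and is disjoint from
every multiple of `(u - K • v)⁺`. -/
lemma sub_inv_smul_le_posPart_sub {u v : E} (hv : 0 ≤ v) (hvu : v ≤ u) {K l : ℝ} (hK : 0 < K)
    (hl : 0 ≤ l) : v - K⁻¹ • u ≤ (u - l • (u - K • v)⁺)⁺ := by
  set a := u - K • v
  have hu : 0 ≤ u := hv.trans hvu
  have hva : v - K⁻¹ • u = K⁻¹ • -a := by
    rw [smul_neg, smul_sub, inv_smul_smul₀ hK.ne', neg_sub]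
  have ha : -a ≤ K • u :=
    calc -a = K • v - u := neg_sub _ _
      _ ≤ K • v := sub_le_self _ hu
      _ ≤ K • u := smul_le_smul_of_nonneg_left hvu hK.le
  have hdisj : (K⁻¹ • a⁻) ⊓ (l • a⁺) = 0 :=
    smul_inf_smul_eq_zero (inf_comm a⁺ a⁻ ▸ posPart_inf_negPart_eq_zero a) (by positivity) hl
  calc v - K⁻¹ • u = K⁻¹ • -a := hva
    _ ≤ K⁻¹ • a⁻ := smul_le_smul_of_nonneg_left (neg_le_negPart a) (by positivity)
    _ ≤ (u - l • a⁺)⁺ := le_posPart_sub_of_inf_eq_zero hdisj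
      ((inv_smul_le_iff_of_pos hK).2 (sup_le ha (smul_nonneg hK.le hu)))

lemma isLUB_posPart_sub_smul {y : ℕ → E} (hy0 : IsGLB (range y) 0) {a : E} (ha : 0 ≤ a)
    {K : ℝ} (hK : 0 < K) : IsLUB (range fun n => (a - K • y n)⁺) a := by
  refine ⟨?_, fun t ht => ?_⟩
  · rintro _ ⟨n, rfl⟩
    exact sup_le (sub_le_self _ (smul_nonneg hK.le (hy0.1 ⟨n, rfl⟩))) ha
  · have : K⁻¹ • (a - t) ≤ 0 := hy0.2 <| by
      rintro _ ⟨n, rfl⟩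
      exact (inv_smul_le_iff_of_pos hK).2 (sub_le_comm.1 ((le_posPart _).trans (ht ⟨n, rfl⟩)))
    exact sub_nonpos.1 (by simpa using (inv_smul_le_iff_of_pos hK).1 this)

end LatticeOrderedSpace

lemma IsOrderedAddMonoid.of_addLeftMono (G : Type*) [AddCommGroup G] [PartialOrder G]
    [AddLeftMono G] : IsOrderedAddMonoid G :=
  ⟨fun _ _ h c => add_le_add_left h c, fun _ _ h c => add_le_add_right h c⟩

/-- Mathlib's `Archimedean` compares arbitrary elements with multiples of positive ones, which
suits only linear orders; this is the Archimedean property of Riesz spaces. -/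
def IsRieszArchimedean (F : Type*) [AddCommMonoid F] [PartialOrder F] : Prop :=
  ∀ x y : F, 0 ≤ x → 0 ≤ y → (∀ n : ℕ, n • x ≤ y) → x = 0

lemma IsRieszArchimedean.nonpos_of_forall_le_smul {F : Type*} [AddCommGroup F] [Lattice F]
    [IsOrderedAddMonoid F] [Module ℝ F] [PosSMulMono ℝ F] (hF : IsRieszArchimedean F) {s w : F}
    (hw : 0 ≤ w) (h : ∀ ε : ℝ, 0 < ε → s ≤ ε • w) : s ≤ 0 := by
  suffices s⁺ = 0 from this ▸ le_posPart s
  refine hF _ _ (posPart_nonneg s) hw fun n => ?_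
  have hn : (0 : ℝ) < n + 1 := by positivity
  have hs : s⁺ ≤ ((n : ℝ) + 1)⁻¹ • w :=
    sup_le (h _ (inv_pos.2 hn)) (smul_nonneg (inv_nonneg.2 hn.le) hw)
  calc n • s⁺ = (n : ℝ) • s⁺ := (Nat.cast_smul_eq_nsmul ℝ n _).symm
    _ ≤ ((n : ℝ) + 1) • s⁺ := smul_le_smul_of_nonneg_right (by linarith) (posPart_nonneg s)
    _ ≤ w := (le_inv_smul_iff_of_pos hn).1 hs

def OrderTendstoZero {E : Type*} [AddCommGroup E] [Lattice E] (u : ℕ → E) : Prop :=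
  ∃ y : ℕ → E, (∀ n, |u n| ≤ y n) ∧ Antitone y ∧ IsGLB (range y) 0

lemma orderTendstoZero_sub_of_isLUB {E : Type*} [AddCommGroup E] [Lattice E]
    [IsOrderedAddMonoid E] {u : ℕ → E} {x : E} (hu : Monotone u) (hx : IsLUB (range u) x) :
    OrderTendstoZero fun n => x - u n := by
  have hux : ∀ n, u n ≤ x := fun n => hx.1 ⟨n, rfl⟩
  refine ⟨fun n => x - u n, fun n => (abs_of_nonneg (sub_nonneg.2 (hux n))).le,
    fun m n h => sub_le_sub_left (hu h) x, ?_, fun t ht => ?_⟩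
  · rintro _ ⟨n, rfl⟩
    exact sub_nonneg.2 (hux n)
  · have : x ≤ x - t := hx.2 <| by
      rintro _ ⟨n, rfl⟩
      exact le_sub_comm.1 (ht ⟨n, rfl⟩)
    simpa using this

section Riesz

variable {E : Type*} [AddCommGroup E] [Lattice E] [Module ℝ E]

class Submodule.IsOrderIdeal (A : Submodule ℝ E) : Prop where
  mem_of_abs_le ⦃x y : E⦄ : |x| ≤ |y| → y ∈ A → x ∈ A

def Submodule.IsUniformlyClosed (A : Submodule ℝ E) : Prop :=
  ∀ (u : ℕ → E) (x : E), (∀ n, u n ∈ A) →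
    (∃ w : E, 0 ≤ w ∧ ∀ ε : ℝ, 0 < ε → ∃ N : ℕ, ∀ n ≥ N, |x - u n| ≤ ε • w) → x ∈ A

def Submodule.IsSigmaIdeal (A : Submodule ℝ E) : Prop :=
  ∀ (u : ℕ → E) (x : E), (∀ n, u n ∈ A) → (∀ n, 0 ≤ u n) → Monotone u →
    IsLUB (range u) x → x ∈ A

variable {F : Type*} [AddCommGroup F] [Lattice F] [Module ℝ F]

def SigmaOrderContinuous (T : E →ₗ[ℝ] F) : Prop :=
  ∀ u : ℕ → E, OrderTendstoZero u → OrderTendstoZero fun n => T (u n)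

lemma map_nonneg_of_map_sup {T : E →ₗ[ℝ] F} (hT : ∀ x y, T (x ⊔ y) = T x ⊔ T y) (x : E)
    (hx : 0 ≤ x) : 0 ≤ T x := by
  rw [← sup_eq_left.2 hx, hT, map_zero]
  exact le_sup_right

section Positive

variable [IsOrderedAddMonoid E] [IsOrderedAddMonoid F]

lemma monotone_of_map_nonneg {T : E →ₗ[ℝ] F} (hT : ∀ x, 0 ≤ x → 0 ≤ T x) : Monotone T :=
  fun a b h => by simpa using hT (b - a) (sub_nonneg.2 h)

lemma abs_map_le_map_of_abs_le {T : E →ₗ[ℝ] F} (hT : ∀ x, 0 ≤ x → 0 ≤ T x) {a b : E}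
    (h : |a| ≤ b) : |T a| ≤ T b := by
  rw [abs_le'] at h ⊢
  rw [← map_neg]
  exact ⟨monotone_of_map_nonneg hT h.1, monotone_of_map_nonneg hT h.2⟩

lemma sigmaOrderContinuous_of_isGLB {T : E →ₗ[ℝ] F} (hT : ∀ x, 0 ≤ x → 0 ≤ T x)
    (h : ∀ y : ℕ → E, Antitone y → IsGLB (range y) 0 → IsGLB (range fun n => T (y n)) 0) :
    SigmaOrderContinuous T := by
  rintro u ⟨y, huy, hy, hy0⟩
  exact ⟨fun n => T (y n), fun n => abs_map_le_map_of_abs_le hT (huy n),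
    (monotone_of_map_nonneg hT).comp_antitone hy, h y hy hy0⟩

end Positive

section Negligible

variable (T : E →ₗ[ℝ] F) (q : ℕ → E)

/-- `T (|x| - l • q n)⁺` has infimum `0` over `n` and `l ≥ 0`, phrased through lower bounds
since the infimum need not exist. -/
def NegligibleMod (x : E) : Prop :=
  ∀ s : F, (∀ n, ∀ l : ℝ, 0 ≤ l → s ≤ T (|x| - l • q n)⁺) → s ≤ 0

variable {T q} [IsOrderedAddMonoid E]

lemma negligibleMod_zero : NegligibleMod T q 0 := fun s hs => by
  simpa using hs 0 0 le_rfl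

lemma negligibleMod_of_nonneg {n : ℕ} (hq : 0 ≤ q n) : NegligibleMod T q (q n) := fun s hs => by
  simpa [abs_of_nonneg hq] using hs n 1 zero_le_one

lemma NegligibleMod.of_abs_le (hT : Monotone T) {x y : E} (hxy : |x| ≤ |y|)
    (hy : NegligibleMod T q y) : NegligibleMod T q x := fun s hs =>
  hy s fun n l hl => (hs n l hl).trans (hT (posPart_mono (sub_le_sub_right hxy _)))

variable [PosSMulMono ℝ E]

lemma NegligibleMod.smul [PosSMulMono ℝ F] {x : E} (hx : NegligibleMod T q x) (c : ℝ) :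
    NegligibleMod T q (c • x) := by
  rcases eq_or_ne c 0 with rfl | hc
  · simpa using negligibleMod_zero
  have hc : 0 < |c| := abs_pos.2 hc
  intro s hs
  suffices |c|⁻¹ • s ≤ 0 by simpa using (inv_smul_le_iff_of_pos hc).1 this
  refine hx _ fun n l hl => (inv_smul_le_iff_of_pos hc).2 ?_
  calc s ≤ T (|c • x| - (|c| * l) • q n)⁺ := hs n _ (mul_nonneg hc.le hl)
    _ = |c| • T (|x| - l • q n)⁺ := by
      rw [abs_smul_eq_abs_smul_abs, mul_smul, ← smul_sub, posPart_smul_of_nonneg hc.le, map_smul]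

variable [IsOrderedAddMonoid F]

lemma NegligibleMod.add (hT : Monotone T) (hq : Monotone q) {x y : E}
    (hx : NegligibleMod T q x) (hy : NegligibleMod T q y) : NegligibleMod T q (x + y) := by
  intro s hs
  refine hy s fun m k hk => sub_nonpos.1 (hx _ fun n l hl => sub_le_iff_le_add.2 ?_)
  have hsplit : |x + y| - (l + k) • q (max n m) ≤
      (|x| - l • q (max n m)) + (|y| - k • q (max n m)) :=
    calc |x + y| - (l + k) • q (max n m) ≤ |x| + |y| - (l + k) • q (max n m) :=
          sub_le_sub_right (abs_add_le x y) _
      _ = (|x| - l • q (max n m)) + (|y| - k • q (max n m)) := by rw [add_smul]; abel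
  calc s ≤ T (|x + y| - (l + k) • q (max n m))⁺ := hs _ _ (add_nonneg hl hk)
    _ ≤ T ((|x| - l • q (max n m))⁺ + (|y| - k • q (max n m))⁺) :=
      hT ((posPart_mono hsplit).trans (posPart_add_le _ _))
    _ ≤ T (|x| - l • q n)⁺ + T (|y| - k • q m)⁺ := by
      rw [map_add]
      exact add_le_add (hT (posPart_sub_smul_anti hl (hq (le_max_left n m))))
        (hT (posPart_sub_smul_anti hk (hq (le_max_right n m))))

variable [PosSMulMono ℝ F]

lemma NegligibleMod.of_uniform_limit (hF : IsRieszArchimedean F)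
    (hT : ∀ x, 0 ≤ x → 0 ≤ T x) {v : ℕ → E} {x w : E} (hv : ∀ n, NegligibleMod T q (v n))
    (hw : 0 ≤ w) (hxv : ∀ ε : ℝ, 0 < ε → ∃ N : ℕ, ∀ n ≥ N, |x - v n| ≤ ε • w) :
    NegligibleMod T q x := by
  intro s hs
  refine hF.nonpos_of_forall_le_smul (hT w hw) fun ε hε => ?_
  obtain ⟨N, hN⟩ := hxv ε hε
  refine sub_nonpos.1 (hv N _ fun n l hl => sub_le_iff_le_add.2 ?_)
  have hx : |x| - l • q n ≤ (|v N| - l • q n) + ε • w :=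
    calc |x| - l • q n = |v N + (x - v N)| - l • q n := by rw [add_sub_cancel]
      _ ≤ |v N| + ε • w - l • q n :=
        sub_le_sub_right ((abs_add_le _ _).trans (add_le_add_right (hN N le_rfl) _)) _
      _ = (|v N| - l • q n) + ε • w := by abel
  calc s ≤ T (|x| - l • q n)⁺ := hs n l hl
    _ ≤ T ((|v N| - l • q n)⁺ + ε • w) :=
      monotone_of_map_nonneg hT ((posPart_mono hx).trans ((posPart_add_le _ _).trans
        (by rw [posPart_eq_self.2 (smul_nonneg hε.le hw)])))
    _ = T (|v N| - l • q n)⁺ + ε • T w := by rw [map_add, map_smul]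

variable (T q) in
def negligibleIdeal (hT : ∀ x, 0 ≤ x → 0 ≤ T x) (hq : Monotone q) : Submodule ℝ E where
  carrier := {x | NegligibleMod T q x}
  zero_mem' := negligibleMod_zero
  add_mem' := (·.add (monotone_of_map_nonneg hT) hq)
  smul_mem' c _ hx := hx.smul c

instance (hT : ∀ x, 0 ≤ x → 0 ≤ T x) (hq : Monotone q) :
    (negligibleIdeal T q hT hq).IsOrderIdeal :=
  ⟨fun _ _ hxy hy => hy.of_abs_le (monotone_of_map_nonneg hT) hxy⟩

lemma isUniformlyClosed_negligibleIdeal (hF : IsRieszArchimedean F)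
    (hT : ∀ x, 0 ≤ x → 0 ≤ T x) (hq : Monotone q) :
    (negligibleIdeal T q hT hq).IsUniformlyClosed := fun _ _ hv ⟨_, hw, hxv⟩ =>
  NegligibleMod.of_uniform_limit hF hT hv hw hxv

end Negligible

namespace Submodule

variable [IsOrderedAddMonoid E]

lemma IsUniformlyClosed.mem_of_abs_sub_le [PosSMulMono ℝ E] {A : Submodule ℝ E}
    (hA : A.IsUniformlyClosed) {v : ℕ → E} {x w : E} (hv : ∀ n, v n ∈ A) (hw : 0 ≤ w)
    (h : ∀ n : ℕ, |x - v n| ≤ ((n : ℝ) + 1)⁻¹ • w) : x ∈ A := by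
  refine hA v x hv ⟨w, hw, fun ε hε => ?_⟩
  obtain ⟨N, hN⟩ := exists_nat_one_div_lt hε
  refine ⟨N, fun n hn => (h n).trans (smul_le_smul_of_nonneg_right ?_ hw)⟩
  calc ((n : ℝ) + 1)⁻¹ ≤ ((N : ℝ) + 1)⁻¹ := by gcongr
    _ ≤ ε := by simpa only [one_div] using hN.le

variable (A : Submodule ℝ E) [A.IsOrderIdeal]

lemma sup_sub_sup_mem {a a' b b' : E} (ha : a - a' ∈ A) (hb : b - b' ∈ A) :
    a ⊔ b - a' ⊔ b' ∈ A := by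
  have h₁ : a ⊔ b - a' ⊔ b ∈ A := IsOrderIdeal.mem_of_abs_le (abs_sup_sub_sup_le_abs a a' b) ha
  have h₂ : b ⊔ a' - b' ⊔ a' ∈ A := IsOrderIdeal.mem_of_abs_le (abs_sup_sub_sup_le_abs b b' a') hb
  rw [sup_comm b, sup_comm b'] at h₂
  simpa using A.add_mem h₁ h₂

lemma inf_sub_inf_mem {a a' b b' : E} (ha : a - a' ∈ A) (hb : b - b' ∈ A) :
    a ⊓ b - a' ⊓ b' ∈ A := by
  have h₁ : a ⊓ b - a' ⊓ b ∈ A := IsOrderIdeal.mem_of_abs_le (abs_inf_sub_inf_le_abs a a' b) ha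
  have h₂ : b ⊓ a' - b' ⊓ a' ∈ A := IsOrderIdeal.mem_of_abs_le (abs_inf_sub_inf_le_abs b b' a') hb
  rw [inf_comm b, inf_comm b'] at h₂
  simpa using A.add_mem h₁ h₂

lemma posPart_sup_mem {a b : E} (ha : a⁺ ∈ A) (hb : b⁺ ∈ A) : (a ⊔ b)⁺ ∈ A := by
  have h : (a ⊔ b)⁺ = a⁺ ⊔ b⁺ - 0 ⊔ 0 := by
    rw [sup_idem, sub_zero, posPart_def, posPart_def, posPart_def, sup_sup_sup_comm, sup_idem]
  rw [h]
  exact A.sup_sub_sup_mem (by rwa [sub_zero]) (by rwa [sub_zero])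

def quotientPositiveCone : AddGroupCone (E ⧸ A) where
  carrier := {ξ | ∃ a, 0 ≤ a ∧ Quotient.mk a = ξ}
  add_mem' := by
    rintro _ _ ⟨a, ha, rfl⟩ ⟨b, hb, rfl⟩
    exact ⟨a + b, add_nonneg ha hb, rfl⟩
  zero_mem' := ⟨0, le_rfl, rfl⟩
  eq_zero_of_mem_of_neg_mem' := by
    rintro _ ⟨a, ha, rfl⟩ ⟨b, hb, hba⟩
    have hab : a + b ∈ A := by
      rw [← Quotient.mk_eq_zero, Quotient.mk_add, hba, add_neg_cancel]
    refine (Quotient.mk_eq_zero A).2 (IsOrderIdeal.mem_of_abs_le ?_ hab)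
    rw [abs_of_nonneg ha, abs_of_nonneg (add_nonneg ha hb)]
    exact le_add_of_nonneg_right hb

instance : PartialOrder (E ⧸ A) := .mkOfAddGroupCone A.quotientPositiveCone

instance : IsOrderedAddMonoid (E ⧸ A) := .mkOfCone A.quotientPositiveCone

namespace Quotient

variable {A}

lemma nonneg_iff {ξ : E ⧸ A} : 0 ≤ ξ ↔ ∃ a, 0 ≤ a ∧ mk a = ξ := by
  change ξ - 0 ∈ A.quotientPositiveCone ↔ _
  rw [sub_zero]
  rfl

lemma mk_le_mk_of_le {a b : E} (h : a ≤ b) : (mk a : E ⧸ A) ≤ mk b := by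
  rw [← sub_nonneg, ← mk_sub, nonneg_iff]
  exact ⟨b - a, sub_nonneg.2 h, rfl⟩

lemma mk_nonpos_iff {a : E} : (mk a : E ⧸ A) ≤ 0 ↔ a⁺ ∈ A := by
  rw [← neg_nonneg, ← mk_neg, nonneg_iff]
  constructor
  · rintro ⟨p, hp, hpa⟩
    rw [Quotient.eq, sub_neg_eq_add] at hpa
    refine IsOrderIdeal.mem_of_abs_le ?_ hpa
    rw [abs_of_nonneg (posPart_nonneg a)]
    exact (posPart_mono (le_add_of_nonneg_left hp)).trans (sup_le (le_abs_self _) (abs_nonneg _))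
  · intro ha
    refine ⟨a⁻, negPart_nonneg a, ?_⟩
    rwa [Quotient.eq, sub_neg_eq_add, ← sub_eq_iff_eq_add'.1 (posPart_sub_negPart a)]

lemma mk_le_mk_iff {a b : E} : (mk a : E ⧸ A) ≤ mk b ↔ (a - b)⁺ ∈ A := by
  rw [← sub_nonpos, ← mk_sub, mk_nonpos_iff]

end Quotient

instance : Lattice (E ⧸ A) where
  sup := Quotient.map₂ (· ⊔ ·) fun _ _ ha _ _ hb => (quotientRel_def A).2 <|
    A.sup_sub_sup_mem ((quotientRel_def A).1 ha) ((quotientRel_def A).1 hb)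
  inf := Quotient.map₂ (· ⊓ ·) fun _ _ ha _ _ hb => (quotientRel_def A).2 <|
    A.inf_sub_inf_mem ((quotientRel_def A).1 ha) ((quotientRel_def A).1 hb)
  le_sup_left := by rintro ⟨a⟩ ⟨b⟩; exact Quotient.mk_le_mk_of_le le_sup_left
  le_sup_right := by rintro ⟨a⟩ ⟨b⟩; exact Quotient.mk_le_mk_of_le le_sup_right
  inf_le_left := by rintro ⟨a⟩ ⟨b⟩; exact Quotient.mk_le_mk_of_le inf_le_left
  inf_le_right := by rintro ⟨a⟩ ⟨b⟩; exact Quotient.mk_le_mk_of_le inf_le_right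
  sup_le := by
    rintro ⟨a⟩ ⟨b⟩ ⟨c⟩ ha hb
    refine Quotient.mk_le_mk_iff.2 ?_
    rw [sup_sub]
    exact A.posPart_sup_mem (Quotient.mk_le_mk_iff.1 ha) (Quotient.mk_le_mk_iff.1 hb)
  le_inf := by
    rintro ⟨a⟩ ⟨b⟩ ⟨c⟩ hb hc
    refine Quotient.mk_le_mk_iff.2 ?_
    rw [sub_inf]
    exact A.posPart_sup_mem (Quotient.mk_le_mk_iff.1 hb) (Quotient.mk_le_mk_iff.1 hc)

lemma mkQ_sup (a b : E) : A.mkQ (a ⊔ b) = A.mkQ a ⊔ A.mkQ b := rfl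

lemma isSigmaIdeal_of_sigmaOrderContinuous_mkQ (h : SigmaOrderContinuous A.mkQ) :
    A.IsSigmaIdeal := by
  intro u x hu _ hmono hx
  obtain ⟨z, hz, -, hz0⟩ := h _ (orderTendstoZero_sub_of_isLUB hmono hx)
  have hmk : ∀ n, A.mkQ (x - u n) = Quotient.mk x := fun n => by
    rw [map_sub, mkQ_apply, mkQ_apply, (Quotient.mk_eq_zero A).2 (hu n), sub_zero]
  have habs : |(Quotient.mk x : E ⧸ A)| ≤ 0 :=
    hz0.2 fun _ ⟨n, hn⟩ => hn ▸ hmk n ▸ hz n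
  rw [← Quotient.mk_eq_zero A]
  exact le_antisymm ((le_abs_self _).trans habs) (neg_nonpos.1 ((neg_le_abs _).trans habs))

variable [PosSMulMono ℝ E]

instance : PosSMulMono ℝ (E ⧸ A) :=
  .of_smul_nonneg fun c hc ξ hξ => by
    obtain ⟨a, ha, rfl⟩ := Quotient.nonneg_iff.1 hξ
    exact Quotient.nonneg_iff.2 ⟨c • a, smul_nonneg hc ha, rfl⟩

lemma isRieszArchimedean_quotient (hA : A.IsUniformlyClosed) : IsRieszArchimedean (E ⧸ A) := by
  intro ξ η hξ hη hn
  obtain ⟨x, hx, rfl⟩ := Quotient.nonneg_iff.1 hξ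
  obtain ⟨y, hy, rfl⟩ := Quotient.nonneg_iff.1 hη
  refine (Quotient.mk_eq_zero A).2 (hA.mem_of_abs_sub_le
    (v := fun n => (x - ((n : ℝ) + 1)⁻¹ • y)⁺) (fun n => ?_) hy fun n => ?_)
  · have hn' : (0 : ℝ) < n + 1 := by positivity
    have h := hn (n + 1)
    rw [← Nat.cast_smul_eq_nsmul ℝ, Nat.cast_succ] at h
    rw [← Quotient.mk_nonpos_iff, Quotient.mk_sub, Quotient.mk_smul, sub_nonpos,
      le_inv_smul_iff_of_pos hn']
    exact h
  · rw [← inf_eq_sub_posPart_sub, abs_of_nonneg (le_inf hx (smul_nonneg (by positivity) hy))]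
    exact inf_le_right

end Submodule

theorem isGLB_map_of_forall_isSigmaIdeal [IsOrderedAddMonoid E] [IsOrderedAddMonoid F]
    [PosSMulMono ℝ E] [PosSMulMono ℝ F]
    (hE : ∀ (A : Submodule ℝ E) [A.IsOrderIdeal], A.IsUniformlyClosed → A.IsSigmaIdeal)
    (hF : IsRieszArchimedean F) {T : E →ₗ[ℝ] F} (hT : ∀ x, 0 ≤ x → 0 ≤ T x)
    {y : ℕ → E} (hy : Antitone y) (hy0 : IsGLB (range y) 0) :
    IsGLB (range fun n => T (y n)) 0 := by
  have hy_nonneg : ∀ n, 0 ≤ y n := fun n => hy0.1 ⟨n, rfl⟩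
  refine ⟨?_, fun b hb => ?_⟩
  · rintro _ ⟨n, rfl⟩
    exact hT _ (hy_nonneg n)
  refine hF.nonpos_of_forall_le_smul (hT _ (hy_nonneg 0)) fun ε hε => ?_
  set q : ℕ → E := fun n => (y 0 - ε⁻¹ • y n)⁺
  have hq : Monotone q := fun m n hmn => posPart_sub_smul_anti (inv_nonneg.2 hε.le) (hy hmn)
  have hy0_mem : y 0 ∈ negligibleIdeal T q hT hq :=
    hE _ (isUniformlyClosed_negligibleIdeal hF hT hq) q (y 0)
      (fun _ => negligibleMod_of_nonneg (posPart_nonneg _)) (fun _ => posPart_nonneg _) hq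
      (isLUB_posPart_sub_smul hy0 (hy_nonneg 0) (inv_pos.2 hε))
  refine sub_nonpos.1 (hy0_mem _ fun n l hl => ?_)
  calc b - ε • T (y 0) ≤ T (y n) - ε • T (y 0) := sub_le_sub_right (hb ⟨n, rfl⟩) _
    _ = T (y n - (ε⁻¹)⁻¹ • y 0) := by rw [inv_inv, map_sub, map_smul]
    _ ≤ T (|y 0| - l • q n)⁺ := by
      rw [abs_of_nonneg (hy_nonneg 0)]
      exact monotone_of_map_nonneg hT (sub_inv_smul_le_posPart_sub (hy_nonneg n)
        (hy (Nat.zero_le n)) (inv_pos.2 hε) hl)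

end Riesz

/-- For a Riesz space `E`, TFAE:
(1) every positive linear operator from `E` into an arbitrary Archimedean Riesz
space is σ-order continuous;
(2) every Riesz homomorphism from `E` into an arbitrary Archimedean Riesz space
is σ-order continuous;
(3) every uniformly closed ideal of `E` is a σ-ideal. -/
theorem stmt_15 {E : Type u}
    [AddCommGroup E] [Lattice E] [Module ℝ E]
    [CovariantClass E E (· + ·) (· ≤ ·)] [PosSMulMono ℝ E] :
    List.TFAE [
      -- (1) every positive operator into an Archimedean Riesz space is
      -- σ-order continuous
      ∀ (F : Type u) [AddCommGroup F] [Lattice F] [Module ℝ F]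
        [CovariantClass F F (· + ·) (· ≤ ·)] [PosSMulMono ℝ F],
        (∀ x y : F, 0 ≤ x → 0 ≤ y → (∀ n : ℕ, n • x ≤ y) → x = 0) →
        ∀ T : E →ₗ[ℝ] F, (∀ x : E, 0 ≤ x → 0 ≤ T x) →
        ∀ u : ℕ → E,
          (∃ y : ℕ → E, (∀ n, |u n| ≤ y n) ∧ Antitone y ∧ IsGLB (Set.range y) 0) →
          (∃ z : ℕ → F, (∀ n, |T (u n)| ≤ z n) ∧ Antitone z ∧ IsGLB (Set.range z) 0),
      -- (2) every Riesz homomorphism into an Archimedean Riesz space is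
      -- σ-order continuous
      ∀ (F : Type u) [AddCommGroup F] [Lattice F] [Module ℝ F]
        [CovariantClass F F (· + ·) (· ≤ ·)] [PosSMulMono ℝ F],
        (∀ x y : F, 0 ≤ x → 0 ≤ y → (∀ n : ℕ, n • x ≤ y) → x = 0) →
        ∀ T : E →ₗ[ℝ] F, (∀ x y : E, T (x ⊔ y) = T x ⊔ T y) →
        ∀ u : ℕ → E,
          (∃ y : ℕ → E, (∀ n, |u n| ≤ y n) ∧ Antitone y ∧ IsGLB (Set.range y) 0) →
          (∃ z : ℕ → F, (∀ n, |T (u n)| ≤ z n) ∧ Antitone z ∧ IsGLB (Set.range z) 0),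
      -- (3) every uniformly closed ideal of `E` is a σ-ideal
      ∀ A : Submodule ℝ E, (∀ x y : E, |x| ≤ |y| → y ∈ A → x ∈ A) →
        (∀ (u : ℕ → E) (x : E), (∀ n, u n ∈ A) →
          (∃ w : E, 0 ≤ w ∧ ∀ ε : ℝ, 0 < ε → ∃ N : ℕ, ∀ n ≥ N, |x - u n| ≤ ε • w) →
          x ∈ A) →
        ∀ (u : ℕ → E) (x : E), (∀ n, u n ∈ A) → (∀ n, 0 ≤ u n) → Monotone u →
          IsLUB (Set.range u) x → x ∈ A] := by
  have := IsOrderedAddMonoid.of_addLeftMono E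
  tfae_have 1 → 2 := fun h1 F _ _ _ _ _ hF T hT => h1 F hF T (map_nonneg_of_map_sup hT)
  tfae_have 3 → 1 := fun h3 F _ _ _ _ _ hF T hT => by
    have := IsOrderedAddMonoid.of_addLeftMono F
    exact sigmaOrderContinuous_of_isGLB hT fun y hy hy0 =>
      isGLB_map_of_forall_isSigmaIdeal
        (fun A _ => h3 A fun _ _ hxy hy => Submodule.IsOrderIdeal.mem_of_abs_le hxy hy) hF hT hy hy0
  tfae_have 2 → 3 := fun h2 A hA hAc => by
    have : A.IsOrderIdeal := ⟨hA⟩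
    exact A.isSigmaIdeal_of_sigmaOrderContinuous_mkQ
      (h2 _ (A.isRieszArchimedean_quotient hAc) A.mkQ A.mkQ_sup)
  tfae_finish
end
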